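/- Let n ≥ 3 and k = 2ⁿ. Define f on {0,1,2,3} by f(0)=2, f(1)=3, f(2)=0, f(3)=1, and let Y = (1/k)·I − (2/k)·ψ₂^{⊗n} on ℂ^{4ⁿ}. Then for every vector i = (i₁,…,iₙ) with i₁ = 0 and i₂,…,iₙ ∈ {1,2,3}, the operator Y − T_A(ψ_{i₁}⊗⋯⊗ψ_{iₙ}) is positive semidefinite, and Tr(Y) < k. Consequently, since 3^{n−1} ≥ 2ⁿ, there exist k = 2ⁿ maximally entangled states in ℂᵏ⊗ℂᵏ that no PPT measurement distinguishes perfectly. -/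

import Mathlib

open Matrix

noncomputable def pauli : Fin 4 → Matrix (Fin 2) (Fin 2) ℂ
  | 0 => 1
  | 1 => !![0, 1; 1, 0]
  | 2 => !![0, -Complex.I; Complex.I, 0]
  | 3 => !![1, 0; 0, -1]

/-- Density operator of the Bell state `|ψᵢ⟩ = (1 ⊗ σᵢ)|ψ₀⟩`,
`|ψ₀⟩ = (|00⟩+|11⟩)/√2`, as a matrix on `ℂ² ⊗ ℂ²`. -/
noncomputable def bell (i : Fin 4) :
    Matrix (Fin 2 × Fin 2) (Fin 2 × Fin 2) ℂ :=
  fun p q => (1 / 2 : ℂ) * pauli i p.2 p.1 * (starRingEnd ℂ) (pauli i q.2 q.1)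

/-- Partial transpose on the first tensor factor. -/
def PT {d : ℕ} (X : Matrix (Fin d × Fin d) (Fin d × Fin d) ℂ) :
    Matrix (Fin d × Fin d) (Fin d × Fin d) ℂ :=
  fun p q => X (q.1, p.2) (p.1, q.2)

open scoped ComplexOrder

/-- `n`-fold tensor product of Bell density operators. -/
noncomputable def nBell {n : ℕ} (i : Fin n → Fin 4) :
    Matrix (Fin n → Fin 2 × Fin 2) (Fin n → Fin 2 × Fin 2) ℂ :=
  fun p q => ∏ l, bell (i l) (p l) (q l)

/-- Partial transpose acting factorwise on all `n` Alice qubits. -/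
def PTn {n : ℕ} (X : Matrix (Fin n → Fin 2 × Fin 2) (Fin n → Fin 2 × Fin 2) ℂ) :
    Matrix (Fin n → Fin 2 × Fin 2) (Fin n → Fin 2 × Fin 2) ℂ :=
  fun p q => X (fun l => ((q l).1, (p l).2)) (fun l => ((p l).1, (q l).2))

/-- `u` is a maximally entangled unit vector of `ℂᵏ ⊗ ℂᵏ`. -/
def IsMaxEnt {k : ℕ} (u : Fin k × Fin k → ℂ) : Prop :=
  ∃ V ∈ Matrix.unitaryGroup (Fin k) ℂ,
    u = fun p => (1 / Real.sqrt k : ℂ) * V p.2 p.1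

/-!
The product Bell states `ψ_j = nBell j`, `j ∈ {0,…,3}ⁿ`, are orthogonal rank-one projectors
summing to the identity, and `T_A ψ_i = ½ - ψ_{f i}` (with `f = ptBellIndex`) makes
`T_A ψ_i = 2⁻ⁿ ∑_j (∏ₗ ±1) ψ_j` diagonal in this basis. Hence `Y - T_A ψ_i` has eigenvalue
`2⁻ⁿ (1 - 2 [j = (2,…,2)] - ∏ₗ ±1) ≥ 0` on `ψ_j`: at `j = (2,…,2)` the sign product is `-1`
because exactly one `iₗ` equals `0 = f⁻¹ 2`. As `Tr Y = 2ⁿ - 2¹⁻ⁿ < 2ⁿ`, weak duality keeps the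
PPT success probability below `1` for any `2ⁿ` of the `3ⁿ⁻¹ ≥ 2ⁿ` admissible `ψ_i`. On
`ℂ^(2ⁿ) ⊗ ℂ^(2ⁿ)` these are maximally entangled, the unitary being a tensor product of Paulis.
-/

section PiKron

variable {ι R α β γ : Type*} [Fintype ι] [CommSemiring R]

def piKron (A : ι → Matrix α β R) : Matrix (ι → α) (ι → β) R :=
  fun p q => ∏ l, A l (p l) (q l)

theorem piKron_apply (A : ι → Matrix α β R) (p : ι → α) (q : ι → β) :
    piKron A p q = ∏ l, A l (p l) (q l) := rfl

theorem piKron_one [DecidableEq α] : piKron (fun _ : ι => (1 : Matrix α α R)) = 1 := by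
  ext p q
  by_cases h : p = q
  · simp [h, piKron_apply, one_apply]
  · obtain ⟨l, hl⟩ := Function.ne_iff.mp h
    rw [one_apply_ne h, piKron_apply]
    exact Finset.prod_eq_zero (Finset.mem_univ l) (one_apply_ne hl)

theorem piKron_mul [DecidableEq ι] [Fintype β] (A : ι → Matrix α β R) (B : ι → Matrix β γ R) :
    piKron A * piKron B = piKron fun l => A l * B l := by
  ext p r
  simp only [mul_apply, piKron_apply, Fintype.prod_sum, Finset.prod_mul_distrib]

theorem piKron_sum [DecidableEq ι] {κ : Type*} [Fintype κ] (A : ι → κ → Matrix α β R) :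
    piKron (fun l => ∑ m, A l m) = ∑ j : ι → κ, piKron fun l => A l (j l) := by
  ext p q
  simp only [piKron_apply, Matrix.sum_apply, Fintype.prod_sum]

theorem piKron_smul (c : ι → R) (A : ι → Matrix α β R) :
    piKron (fun l => c l • A l) = (∏ l, c l) • piKron A := by
  ext p q
  simp only [piKron_apply, Matrix.smul_apply, smul_eq_mul, Finset.prod_mul_distrib]

theorem piKron_vecMulVec (u : ι → α → R) (v : ι → β → R) :
    piKron (fun l => vecMulVec (u l) (v l)) =
      vecMulVec (fun p => ∏ l, u l (p l)) (fun q => ∏ l, v l (q l)) := by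
  ext p q
  simp only [piKron_apply, vecMulVec_apply, Finset.prod_mul_distrib]

theorem trace_piKron [DecidableEq ι] [Fintype α] (A : ι → Matrix α α R) :
    trace (piKron A) = ∏ l, trace (A l) := by
  simp only [trace, diag, piKron_apply, Fintype.prod_sum]

theorem conjTranspose_piKron [StarRing R] (A : ι → Matrix α β R) :
    (piKron A)ᴴ = piKron fun l => (A l)ᴴ := by
  ext p q
  simp only [conjTranspose_apply, piKron_apply, star_prod]

theorem piKron_mem_unitaryGroup {R : Type*} [CommRing R] [StarRing R] [DecidableEq ι]
    [Fintype α] [DecidableEq α] {A : ι → Matrix α α R} (hA : ∀ l, A l ∈ unitaryGroup α R) :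
    piKron A ∈ unitaryGroup (ι → α) R := by
  rw [mem_unitaryGroup_iff, star_eq_conjTranspose, conjTranspose_piKron, piKron_mul]
  simp_rw [← star_eq_conjTranspose, mem_unitaryGroup_iff.mp (hA _)]
  exact piKron_one

end PiKron

def ptBellIndex : Fin 4 → Fin 4 := ![2, 3, 0, 1]

noncomputable def bellVec (i : Fin 4) : Fin 2 × Fin 2 → ℂ :=
  fun p => (Real.sqrt 2 : ℂ)⁻¹ * pauli i p.2 p.1

theorem pauli_mem_unitaryGroup (i : Fin 4) : pauli i ∈ unitaryGroup (Fin 2) ℂ := by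
  rw [mem_unitaryGroup_iff]
  fin_cases i <;> ext a b <;> fin_cases a <;> fin_cases b <;>
    simp [pauli, mul_apply, Fin.sum_univ_two, one_apply]

theorem bell_eq_vecMulVec (i : Fin 4) : bell i = vecMulVec (bellVec i) (star (bellVec i)) := by
  have h : (Real.sqrt 2 : ℂ)⁻¹ * (starRingEnd ℂ) (Real.sqrt 2 : ℂ)⁻¹ = 1 / 2 := by
    rw [map_inv₀, Complex.conj_ofReal, ← mul_inv, ← Complex.ofReal_mul,
      Real.mul_self_sqrt zero_le_two]
    norm_num
  ext p q
  simp only [bell, bellVec, vecMulVec_apply, Pi.star_apply, RCLike.star_def, map_mul, ← h]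
  ring

theorem sum_bell : ∑ i, bell i = 1 := by
  ext ⟨a, b⟩ ⟨c, d⟩
  fin_cases a <;> fin_cases b <;> fin_cases c <;> fin_cases d <;>
    simp [bell, pauli, Fin.sum_univ_four, one_apply, Matrix.sum_apply] <;> ring_nf <;>
    simp [Complex.ext_iff] <;> norm_num

theorem PT_bell (i : Fin 4) : PT (bell i) = (1 / 2 : ℂ) • 1 - bell (ptBellIndex i) := by
  ext ⟨a, b⟩ ⟨c, d⟩
  fin_cases i <;> fin_cases a <;> fin_cases b <;> fin_cases c <;> fin_cases d <;>
    simp [PT, bell, pauli, ptBellIndex, one_apply] <;> ring_nf <;> simp [Complex.ext_iff] <;> norm_num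

theorem trace_bell (i : Fin 4) : trace (bell i) = 1 := by
  fin_cases i <;> simp [trace, bell, pauli, Fintype.sum_prod_type, Complex.ext_iff] <;> norm_num

theorem trace_conjTranspose_bell_mul_bell {i j : Fin 4} (h : i ≠ j) :
    trace ((bell i)ᴴ * bell j) = 0 := by
  fin_cases i <;> fin_cases j <;>
    simp [trace, bell, pauli, mul_apply, Fintype.sum_prod_type] at h ⊢

def ptSign (i m : Fin 4) : ℝ := if m = ptBellIndex i then -1 else 1

theorem PT_bell_eq_sum (i : Fin 4) :
    PT (bell i) = (1 / 2 : ℂ) • ∑ m, (ptSign i m : ℂ) • bell m := by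
  have hsign (m : Fin 4) : (ptSign i m : ℂ) • bell m =
      bell m - if m = ptBellIndex i then (2 : ℂ) • bell m else 0 := by
    unfold ptSign; split_ifs <;> simp; module
  simp only [hsign, Finset.sum_sub_distrib, Finset.sum_ite_eq', Finset.mem_univ, if_true,
    sum_bell, PT_bell, smul_sub, smul_smul]
  norm_num

theorem nBell_eq_piKron {n : ℕ} (i : Fin n → Fin 4) : nBell i = piKron fun l => bell (i l) := rfl

theorem sum_nBell (n : ℕ) : ∑ j : Fin n → Fin 4, nBell j = 1 := by
  simp only [nBell_eq_piKron, ← piKron_sum, sum_bell, piKron_one]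

theorem PTn_piKron {n : ℕ} (A : Fin n → Matrix (Fin 2 × Fin 2) (Fin 2 × Fin 2) ℂ) :
    PTn (piKron A) = piKron fun l => PT (A l) := rfl

theorem PTn_nBell {n : ℕ} (i : Fin n → Fin 4) :
    PTn (nBell i) = (1 / 2 : ℂ) ^ n • ∑ j : Fin n → Fin 4,
      ((∏ l, ptSign (i l) (j l) : ℝ) : ℂ) • nBell j := by
  simp only [nBell_eq_piKron, PTn_piKron, PT_bell_eq_sum, piKron_smul, piKron_sum,
    Finset.prod_const, Finset.card_univ, Fintype.card_fin, Finset.smul_sum, Complex.ofReal_prod]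

noncomputable def nBellVec {n : ℕ} (i : Fin n → Fin 4) : (Fin n → Fin 2 × Fin 2) → ℂ :=
  fun q => ∏ l, bellVec (i l) (q l)

theorem nBell_eq_vecMulVec {n : ℕ} (i : Fin n → Fin 4) :
    nBell i = vecMulVec (nBellVec i) (star (nBellVec i)) := by
  rw [nBell_eq_piKron]
  simp only [bell_eq_vecMulVec, piKron_vecMulVec]
  congr
  ext q
  simp only [nBellVec, Pi.star_apply, star_prod]

theorem nBell_posSemidef {n : ℕ} (i : Fin n → Fin 4) : (nBell i).PosSemidef :=
  nBell_eq_vecMulVec i ▸ posSemidef_vecMulVec_self_star _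

theorem trace_nBell {n : ℕ} (i : Fin n → Fin 4) : trace (nBell i) = 1 := by
  simp [nBell_eq_piKron, trace_piKron, trace_bell]

theorem trace_conjTranspose_nBell_mul_nBell {n : ℕ} {i j : Fin n → Fin 4} (h : i ≠ j) :
    trace ((nBell i)ᴴ * nBell j) = 0 := by
  obtain ⟨l, hl⟩ := Function.ne_iff.mp h
  rw [nBell_eq_piKron, nBell_eq_piKron, conjTranspose_piKron, piKron_mul, trace_piKron]
  exact Finset.prod_eq_zero (Finset.mem_univ l) (trace_conjTranspose_bell_mul_bell hl)

noncomputable def dualWitness (n : ℕ) :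
    Matrix (Fin n → Fin 2 × Fin 2) (Fin n → Fin 2 × Fin 2) ℂ :=
  (1 / 2 ^ n : ℂ) • 1 - (2 / 2 ^ n : ℂ) • nBell (fun _ => 2)

noncomputable def dualCoeff {n : ℕ} (i j : Fin n → Fin 4) : ℝ :=
  1 - (if j = fun _ => 2 then 2 else 0) - ∏ l, ptSign (i l) (j l)

theorem dualWitness_sub_PTn_nBell {n : ℕ} (i : Fin n → Fin 4) :
    dualWitness n - PTn (nBell i) =
      (1 / 2 : ℂ) ^ n • ∑ j, (dualCoeff i j : ℂ) • nBell j := by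
  rw [dualWitness, PTn_nBell, ← sum_nBell]
  simp only [dualCoeff, Complex.ofReal_sub, Complex.ofReal_one, apply_ite Complex.ofReal,
    Complex.ofReal_ofNat, Complex.ofReal_zero, sub_smul, one_smul, ite_smul, zero_smul,
    Finset.sum_sub_distrib, Finset.sum_ite_eq', Finset.mem_univ, if_true, smul_sub,
    Finset.smul_sum, smul_smul, ← _root_.one_div_pow, div_eq_mul_one_div (2 : ℂ)]
  module

theorem abs_prod_ptSign {n : ℕ} (i j : Fin n → Fin 4) : |∏ l, ptSign (i l) (j l)| = 1 := by
  rw [Finset.abs_prod]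
  refine Finset.prod_eq_one fun l _ => ?_
  unfold ptSign; split_ifs <;> simp

theorem prod_ptSign_const_two {n : ℕ} (hn : 0 < n) {i : Fin n → Fin 4} (h0 : i ⟨0, hn⟩ = 0)
    (h1 : ∀ l : Fin n, l.val ≠ 0 → i l ∈ ({1, 2, 3} : Set (Fin 4))) :
    ∏ l, ptSign (i l) 2 = -1 := by
  have hsign (l : Fin n) : ptSign (i l) 2 = if ⟨0, hn⟩ = l then -1 else 1 := by
    split_ifs with hl
    · simp [ptSign, ← hl, h0, ptBellIndex]
    · have hil := h1 l fun h => hl (Fin.ext h.symm)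
      simp only [Set.mem_insert_iff, Set.mem_singleton_iff] at hil
      rcases hil with h | h | h <;> simp [ptSign, h, ptBellIndex]
  simp only [hsign, Finset.prod_ite_eq, Finset.mem_univ, if_true]

theorem dualCoeff_nonneg {n : ℕ} (hn : 0 < n) {i : Fin n → Fin 4} (h0 : i ⟨0, hn⟩ = 0)
    (h1 : ∀ l : Fin n, l.val ≠ 0 → i l ∈ ({1, 2, 3} : Set (Fin 4))) (j : Fin n → Fin 4) :
    0 ≤ dualCoeff i j := by
  unfold dualCoeff
  split_ifs with hj
  · rw [hj, prod_ptSign_const_two hn h0 h1]; norm_num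
  · linarith [le_abs_self (∏ l, ptSign (i l) (j l)), abs_prod_ptSign i j]

theorem posSemidef_dualWitness_sub_PTn_nBell {n : ℕ} (hn : 0 < n) {i : Fin n → Fin 4}
    (h0 : i ⟨0, hn⟩ = 0) (h1 : ∀ l : Fin n, l.val ≠ 0 → i l ∈ ({1, 2, 3} : Set (Fin 4))) :
    (dualWitness n - PTn (nBell i)).PosSemidef := by
  rw [dualWitness_sub_PTn_nBell]
  refine PosSemidef.smul (posSemidef_sum _ fun j _ => ?_) (by positivity)
  exact (nBell_posSemidef j).smul (Complex.zero_le_real.mpr (dualCoeff_nonneg hn h0 h1 j))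

theorem re_trace_dualWitness_lt (n : ℕ) : (trace (dualWitness n)).re < 2 ^ n := by
  have htrace : trace (dualWitness n) = ((2 ^ n - 2 / 2 ^ n : ℝ) : ℂ) := by
    rw [dualWitness, trace_sub, trace_smul, trace_smul, trace_one, trace_nBell]
    simp only [Fintype.card_fun, Fintype.card_prod, Fintype.card_fin, smul_eq_mul]
    push_cast
    rw [show (4 : ℂ) = 2 * 2 by norm_num, mul_pow]
    field_simp
  rw [htrace, Complex.ofReal_re]
  have : (0 : ℝ) < 2 / 2 ^ n := by positivity
  linarith

section PartialTranspose

variable {d : ℕ}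

theorem PT_one : PT (1 : Matrix (Fin d × Fin d) (Fin d × Fin d) ℂ) = 1 := by
  ext ⟨a, b⟩ ⟨c, e⟩
  simp only [PT, one_apply, Prod.mk.injEq]
  by_cases hac : a = c <;> by_cases hbe : b = e <;> simp [hac, hbe, eq_comm]

theorem PT_sum {ι : Type*} [Fintype ι] (A : ι → Matrix (Fin d × Fin d) (Fin d × Fin d) ℂ) :
    PT (∑ j, A j) = ∑ j, PT (A j) := by
  ext p q
  simp only [PT, Matrix.sum_apply]

theorem trace_PT_mul_PT (A B : Matrix (Fin d × Fin d) (Fin d × Fin d) ℂ) :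
    trace (PT A * PT B) = trace (A * B) := by
  simp only [trace, diag, mul_apply, PT, Fintype.sum_prod_type]
  conv_lhs => rw [Finset.sum_comm]; enter [2, b]; rw [Finset.sum_comm]
  conv_rhs => rw [Finset.sum_comm]

end PartialTranspose

open scoped MatrixOrder in
theorem trace_mul_nonneg_of_posSemidef {𝕜 m : Type*} [RCLike 𝕜] [Fintype m] {A B : Matrix m m 𝕜}
    (hA : A.PosSemidef) (hB : B.PosSemidef) : 0 ≤ trace (A * B) := by
  classical
  obtain ⟨C, rfl⟩ := CStarAlgebra.nonneg_iff_eq_star_mul_self.mp hA.nonneg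
  rw [star_eq_conjTranspose, Matrix.mul_assoc, trace_mul_comm]
  exact (hB.mul_mul_conjTranspose_same C).trace_nonneg

theorem sum_re_trace_le_of_posSemidef_sub_PT {d : ℕ} {ι : Type*} [Fintype ι]
    {ρ P : ι → Matrix (Fin d × Fin d) (Fin d × Fin d) ℂ} {Y : Matrix (Fin d × Fin d) (Fin d × Fin d) ℂ}
    (hY : ∀ j, (Y - PT (ρ j)).PosSemidef) (hP : ∀ j, (P j).IsHermitian)
    (hPT : ∀ j, (PT (P j)).PosSemidef) (hsum : ∑ j, P j = 1) :
    ∑ j, (trace ((P j)ᴴ * ρ j)).re ≤ (trace Y).re := by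
  have hterm (j : ι) : (trace ((P j)ᴴ * ρ j)).re ≤ (trace (PT (P j) * Y)).re := by
    have := Complex.re_le_re (trace_mul_nonneg_of_posSemidef (hPT j) (hY j))
    rw [Matrix.mul_sub, trace_sub, Complex.sub_re, Complex.zero_re, sub_nonneg,
      trace_PT_mul_PT] at this
    rwa [(hP j).eq]
  calc ∑ j, (trace ((P j)ᴴ * ρ j)).re ≤ ∑ j, (trace (PT (P j) * Y)).re :=
        Finset.sum_le_sum fun j _ => hterm j
    _ = (trace Y).re := by
        rw [← Complex.re_sum, ← trace_sum, ← Finset.sum_mul, ← PT_sum, hsum, PT_one, one_mul]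

section Reindex

variable {R m n : Type*} [Fintype m] [Fintype n] (e : m ≃ n)

theorem trace_reindex [AddCommMonoid R] (M : Matrix m m R) : trace (reindex e e M) = trace M :=
  e.symm.sum_comp fun i => M i i

theorem trace_conjTranspose_reindex_mul_reindex [NonUnitalNonAssocSemiring R] [StarRing R]
    (A B : Matrix m m R) : trace ((reindex e e A)ᴴ * reindex e e B) = trace (Aᴴ * B) := by
  rw [conjTranspose_reindex, reindex_apply, reindex_apply, submatrix_mul_equiv, ← reindex_apply,
    trace_reindex]

theorem reindex_mem_unitaryGroup [CommRing R] [StarRing R] [DecidableEq m] [DecidableEq n]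
    {U : Matrix m m R} (hU : U ∈ unitaryGroup m R) : reindex e e U ∈ unitaryGroup n R := by
  rw [mem_unitaryGroup_iff, star_eq_conjTranspose, conjTranspose_reindex, reindex_apply,
    reindex_apply, submatrix_mul_equiv, ← star_eq_conjTranspose, mem_unitaryGroup_iff.mp hU,
    submatrix_one_equiv]

end Reindex

def bipartiteEquiv (n : ℕ) : (Fin n → Fin 2 × Fin 2) ≃ Fin (2 ^ n) × Fin (2 ^ n) :=
  (Equiv.arrowProdEquivProdArrow (Fin n) (fun _ => Fin 2) (fun _ => Fin 2)).trans
    (Equiv.prodCongr finFunctionFinEquiv finFunctionFinEquiv)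

theorem PT_reindex_bipartiteEquiv {n : ℕ}
    (M : Matrix (Fin n → Fin 2 × Fin 2) (Fin n → Fin 2 × Fin 2) ℂ) :
    PT (reindex (bipartiteEquiv n) (bipartiteEquiv n) M) =
      reindex (bipartiteEquiv n) (bipartiteEquiv n) (PTn M) := by
  ext ⟨x, y⟩ ⟨x', y'⟩
  rfl

theorem isMaxEnt_nBellVec_comp {n : ℕ} (i : Fin n → Fin 4) :
    IsMaxEnt (nBellVec i ∘ (bipartiteEquiv n).symm) := by
  have hscale : ((Real.sqrt 2 : ℂ)⁻¹) ^ n = (1 / Real.sqrt ((2 ^ n : ℕ) : ℝ) : ℂ) := by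
    have hsqrt : Real.sqrt (2 ^ n) = Real.sqrt 2 ^ n := by
      rw [Real.sqrt_eq_iff_mul_self_eq (by positivity) (by positivity), ← mul_pow,
        Real.mul_self_sqrt zero_le_two]
    rw [inv_pow, one_div, Nat.cast_pow, Nat.cast_ofNat, hsqrt, Complex.ofReal_pow]
  refine ⟨reindex finFunctionFinEquiv finFunctionFinEquiv (piKron fun l => pauli (i l)),
    reindex_mem_unitaryGroup _ (piKron_mem_unitaryGroup fun l => pauli_mem_unitaryGroup (i l)), ?_⟩
  ext ⟨x, y⟩
  simp only [Function.comp_apply, nBellVec, bellVec, Finset.prod_mul_distrib, Finset.prod_const,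
    Finset.card_univ, Fintype.card_fin, hscale, reindex_apply, submatrix_apply, piKron_apply]
  rfl

theorem reindex_nBell_eq_vecMulVec {n : ℕ} (i : Fin n → Fin 4) :
    reindex (bipartiteEquiv n) (bipartiteEquiv n) (nBell i) =
      vecMulVec (nBellVec i ∘ (bipartiteEquiv n).symm)
        (star (nBellVec i ∘ (bipartiteEquiv n).symm)) := by
  rw [nBell_eq_vecMulVec]
  rfl

theorem two_pow_le_three_pow_pred {n : ℕ} (hn : 3 ≤ n) : 2 ^ n ≤ 3 ^ (n - 1) := by
  induction n, hn using Nat.le_induction with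
  | base => norm_num
  | succ k hk ih =>
    calc 2 ^ (k + 1) = 2 ^ k * 2 := pow_succ 2 k
      _ ≤ 3 ^ (k - 1) * 3 := Nat.mul_le_mul ih (by norm_num)
      _ = 3 ^ (k + 1 - 1) := by rw [← pow_succ]; congr 1; omega

theorem exists_injective_admissible {k n : ℕ} (hn : 0 < n) (hk : k ≤ 3 ^ (n - 1)) :
    ∃ g : Fin k → Fin n → Fin 4, Function.Injective g ∧
      ∀ j, g j ⟨0, hn⟩ = 0 ∧ ∀ l : Fin n, l.val ≠ 0 → g j l ∈ ({1, 2, 3} : Set (Fin 4)) := by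
  obtain ⟨m, rfl⟩ : ∃ m, n = m + 1 := ⟨n - 1, by omega⟩
  obtain ⟨e⟩ : Nonempty (Fin k ↪ (Fin m → Fin 3)) := by
    simpa [Function.Embedding.nonempty_iff_card_le] using hk
  refine ⟨fun j => Fin.cons (0 : Fin 4) fun l => (e j l).succ,
    (Fin.cons_right_injective _).comp ((Fin.succ_injective _).comp_left.comp e.injective),
    fun j => ⟨rfl, fun l hl => ?_⟩⟩
  obtain ⟨l, rfl⟩ := Fin.exists_succ_eq.mpr (fun h => hl (congrArg Fin.val h))
  simp only [Fin.cons_succ]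
  generalize e j l = x
  fin_cases x <;> simp

theorem powers_of_two_indistinguishable {n : ℕ} (hn : 3 ≤ n) :
    (∀ i : Fin n → Fin 4, i ⟨0, by omega⟩ = 0 →
      (∀ l : Fin n, l.val ≠ 0 → i l ∈ ({1, 2, 3} : Set (Fin 4))) →
      ((1 / 2 ^ n : ℂ) • (1 : Matrix (Fin n → Fin 2 × Fin 2) (Fin n → Fin 2 × Fin 2) ℂ)
        - (2 / 2 ^ n : ℂ) • nBell (fun _ => 2) - PTn (nBell i)).PosSemidef) ∧
    (Matrix.trace ((1 / 2 ^ n : ℂ) • (1 : Matrix (Fin n → Fin 2 × Fin 2)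
        (Fin n → Fin 2 × Fin 2) ℂ) - (2 / 2 ^ n : ℂ) • nBell (fun _ => 2))).re < 2 ^ n ∧
    (3 ^ (n - 1) ≥ 2 ^ n ∧
      ∃ ρ : Fin (2 ^ n) → Matrix (Fin (2 ^ n) × Fin (2 ^ n)) (Fin (2 ^ n) × Fin (2 ^ n)) ℂ,
        (∀ j, ∃ u : Fin (2 ^ n) × Fin (2 ^ n) → ℂ,
          IsMaxEnt u ∧ ρ j = Matrix.vecMulVec u (star u)) ∧
        (∀ j j', j ≠ j' → Matrix.trace ((ρ j)ᴴ * ρ j') = 0) ∧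
        ∀ P : Fin (2 ^ n) → Matrix (Fin (2 ^ n) × Fin (2 ^ n)) (Fin (2 ^ n) × Fin (2 ^ n)) ℂ,
          (∀ j, (P j).PosSemidef) →
          (∀ j, (PT (P j)).PosSemidef) →
          (∑ j, P j = 1) →
          ∑ j, (Matrix.trace ((P j)ᴴ * ρ j)).re < 2 ^ n) := by
  have hpos : 0 < n := by omega
  refine ⟨fun i h0 h1 => posSemidef_dualWitness_sub_PTn_nBell hpos h0 h1,
    re_trace_dualWitness_lt n, two_pow_le_three_pow_pred hn, ?_⟩
  obtain ⟨g, hg, hadm⟩ := exists_injective_admissible hpos (two_pow_le_three_pow_pred hn)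
  set e := bipartiteEquiv n
  refine ⟨fun j => reindex e e (nBell (g j)),
    fun j => ⟨_, isMaxEnt_nBellVec_comp (g j), reindex_nBell_eq_vecMulVec (g j)⟩,
    fun j j' hjj' => (trace_conjTranspose_reindex_mul_reindex e _ _).trans
      (trace_conjTranspose_nBell_mul_nBell (hg.ne hjj')),
    fun P hP hPT hsum => ?_⟩
  have hY (j : Fin (2 ^ n)) :
      (reindex e e (dualWitness n) - PT (reindex e e (nBell (g j)))).PosSemidef := by
    rw [PT_reindex_bipartiteEquiv]
    exact (posSemidef_dualWitness_sub_PTn_nBell hpos (hadm j).1 (hadm j).2).submatrix _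
  calc _ ≤ (trace (reindex e e (dualWitness n))).re :=
        sum_re_trace_le_of_posSemidef_sub_PT hY (fun j => (hP j).isHermitian) hPT hsum
    _ < 2 ^ n := trace_reindex e (dualWitness n) ▸ re_trace_dualWitness_lt n
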